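/- arXiv:2309.16256 — 3 statements merged into one kernel-verified Lean document; each statement's English description precedes it below -/
import Mathlib

section
/- If an LLL-reduced basis B = (b_1,…,b_N) of a lattice L is gap-free, then the maximum Gram–Schmidt norm satisfies max_i ‖b_i*‖ ≤ (4/3 + ε)^{(N−1)/4} · vol(L)^{1/N}. -/
/-!
Grow a set of indices greedily from any index `m`. While the set `S` is a proper nonempty
subset, some outside index `x` has `f j ≤ α f x` for an inside `j`: if `S` is not closed under
`i ↦ i + 1` this is the Lovász bound `f i ≤ α f (i + 1)`, and otherwise `S` is a final segment
and gap-freeness at its boundary yields an outside value dominating an inside one. Hence the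
`k`-th index added has value at least `f m / α ^ k`, so `f m ^ N ≤ α ^ (N(N-1)/2) ∏ f`; with
`α = √(4/3 + ε)` taking `N`-th roots gives the bound.
-/

open scoped BigOperators

noncomputable def gramSchmidtFin {N M : ℕ} (b : Fin M → EuclideanSpace ℝ (Fin N)) :
    Fin M → EuclideanSpace ℝ (Fin N) :=
  @InnerProductSpace.gramSchmidt ℝ _ _ _ _ (Fin M) _ _ ((Fin.Lt.isWellOrder M).toIsWellFounded) b

open Finset

def GapFree {N : ℕ} (f : Fin N → ℝ) : Prop :=
  ¬ ∃ r : ℕ, r + 1 < N ∧ ∀ i j : Fin N, i.val ≤ r → r < j.val → f i < f j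

theorem Fin.mem_of_le_of_forall_succ_mem {N : ℕ} {S : Finset (Fin N)}
    (hS : ∀ j ∈ S, ∀ h : j.val + 1 < N, (⟨j.val + 1, h⟩ : Fin N) ∈ S)
    {j k : Fin N} (hj : j ∈ S) (hjk : j ≤ k) : k ∈ S := by
  suffices ∀ n, j.val ≤ n → ∀ h : n < N, (⟨n, h⟩ : Fin N) ∈ S from this k hjk k.isLt
  intro n hn
  induction n, hn using Nat.le_induction with
  | base => exact fun _ => hj
  | succ n _ ih => exact fun h => hS _ (ih (by omega)) h

theorem GapFree.exists_mem_notMem_le_mul {N : ℕ} {f : Fin N → ℝ} {α : ℝ} (hgap : GapFree f)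
    (hα : 1 ≤ α) (hf : ∀ j, 0 ≤ f j)
    (hstep : ∀ i : Fin N, ∀ h : i.val + 1 < N, f i ≤ α * f ⟨i.val + 1, h⟩)
    {S : Finset (Fin N)} (hS : S.Nonempty) (hSu : S ≠ univ) :
    ∃ j ∈ S, ∃ x ∉ S, f j ≤ α * f x := by
  by_cases hclosed : ∀ j ∈ S, ∀ h : j.val + 1 < N, (⟨j.val + 1, h⟩ : Fin N) ∈ S
  swap
  · push Not at hclosed
    obtain ⟨j, hj, h, hsucc⟩ := hclosed
    exact ⟨j, hj, _, hsucc, hstep j h⟩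
  -- `S` is now a final segment; the gap-free condition at its last outside index crosses it.
  have hSc : Sᶜ.Nonempty := (compl_ne_univ_iff_nonempty Sᶜ).1 (by rwa [compl_compl])
  set r := Sᶜ.max' hSc
  have hr : r ∉ S := mem_compl.1 (max'_mem _ _)
  have hlt_of_mem : ∀ s ∈ S, r < s := fun s hs =>
    lt_of_not_ge fun h => hr (Fin.mem_of_le_of_forall_succ_mem hclosed hs h)
  obtain ⟨s, hs⟩ := hS
  obtain ⟨i, j, hir, hrj, hji⟩ : ∃ i j : Fin N, i.val ≤ r.val ∧ r.val < j.val ∧ f j ≤ f i := by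
    by_contra! h
    exact hgap ⟨r.val, by have := hlt_of_mem s hs; omega, h⟩
  refine ⟨j, ?_, i, fun hi => hr (Fin.mem_of_le_of_forall_succ_mem hclosed hi hir), ?_⟩
  · by_contra hj
    exact not_le.2 hrj (le_max' Sᶜ j (mem_compl.2 hj))
  · exact hji.trans (le_mul_of_one_le_left (hf i) hα)

theorem exists_finset_pow_le_pow_sum_range_mul_prod {ι : Type*} [Fintype ι] {f : ι → ℝ} {α : ℝ}
    (hα : 1 ≤ α) (hf : ∀ i, 0 ≤ f i)
    (hexch : ∀ S : Finset ι, S.Nonempty → S ≠ univ → ∃ j ∈ S, ∃ x ∉ S, f j ≤ α * f x)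
    (m : ι) {k : ℕ} (hk : k + 1 ≤ Fintype.card ι) :
    ∃ S : Finset ι, #S = k + 1 ∧ (∀ j ∈ S, f m ≤ α ^ k * f j) ∧
      f m ^ (k + 1) ≤ α ^ (∑ i ∈ range (k + 1), i) * ∏ j ∈ S, f j := by
  classical
  induction k with
  | zero => exact ⟨{m}, by simp, by simp, by simp⟩
  | succ k ih =>
    obtain ⟨S, hcard, hbound, hprod⟩ := ih (by omega)
    obtain ⟨j, hj, x, hx, hjx⟩ := hexch S (card_pos.1 (by omega))
      (fun h => by simp [h] at hcard; omega)
    have hα0 : 0 ≤ α := zero_le_one.trans hα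
    have hαk : 0 ≤ α ^ k := pow_nonneg hα0 k
    have hmx : f m ≤ α ^ (k + 1) * f x := calc
      f m ≤ α ^ k * f j := hbound j hj
      _ ≤ α ^ k * (α * f x) := mul_le_mul_of_nonneg_left hjx hαk
      _ = α ^ (k + 1) * f x := by ring
    refine ⟨insert x S, by rw [card_insert_of_notMem hx, hcard], ?_, ?_⟩
    · simp only [mem_insert, forall_eq_or_imp]
      refine ⟨hmx, fun y hy => (hbound y hy).trans ?_⟩
      exact mul_le_mul_of_nonneg_right (pow_le_pow_right₀ hα k.le_succ) (hf y)
    · rw [prod_insert hx, sum_range_succ _ (k + 1), pow_add α]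
      calc f m ^ (k + 1 + 1) = f m ^ (k + 1) * f m := pow_succ _ _
        _ ≤ (α ^ (∑ i ∈ range (k + 1), i) * ∏ j ∈ S, f j) * (α ^ (k + 1) * f x) :=
            mul_le_mul hprod hmx (hf m)
              (mul_nonneg (pow_nonneg hα0 _) (prod_nonneg fun j _ => hf j))
        _ = _ := by ring

theorem pow_card_le_pow_sum_range_mul_prod {ι : Type*} [Fintype ι] {f : ι → ℝ} {α : ℝ}
    (hα : 1 ≤ α) (hf : ∀ i, 0 ≤ f i)
    (hexch : ∀ S : Finset ι, S.Nonempty → S ≠ univ → ∃ j ∈ S, ∃ x ∉ S, f j ≤ α * f x) (m : ι) :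
    f m ^ Fintype.card ι ≤ α ^ (∑ i ∈ range (Fintype.card ι), i) * ∏ i, f i := by
  obtain ⟨k, hk⟩ := Nat.exists_eq_add_one_of_ne_zero (Fintype.card_pos_iff.2 ⟨m⟩).ne'
  obtain ⟨S, hS, -, hprod⟩ := exists_finset_pow_le_pow_sum_range_mul_prod hα hf hexch m hk.ge
  rwa [eq_univ_of_card S (hS.trans hk.symm), ← hk] at hprod

theorem Real.sqrt_pow_sum_range {A : ℝ} (hA : 0 ≤ A) (N : ℕ) :
    √A ^ (∑ i ∈ range N, i) = (A ^ ((N - 1 : ℝ) / 4)) ^ N := by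
  have hsum : ((∑ i ∈ range N, i : ℕ) : ℝ) * 2 = N * (N - 1) := by
    induction N with
    | zero => simp
    | succ n ih => rw [sum_range_succ]; push_cast at ih ⊢; linarith
  rw [Real.sqrt_eq_rpow, ← Real.rpow_mul_natCast hA, ← Real.rpow_mul_natCast hA]
  congr 1
  linarith

theorem gap_free_LLL_general (N : ℕ) (ε : ℝ) (hε : 0 < ε)
    (bs : Fin N → EuclideanSpace ℝ (Fin N))
    (hLLL : ∀ i : Fin N, ∀ h : i.val + 1 < N,
      ‖bs i‖ ≤ Real.sqrt (4 / 3 + ε) * ‖bs ⟨i.val + 1, h⟩‖)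
    (hGapFree : ¬ ∃ r : ℕ, r + 1 < N ∧
      ∀ i j : Fin N, i.val ≤ r → r < j.val → ‖bs i‖ < ‖bs j‖) :
    ∀ i : Fin N, ‖bs i‖ ≤ (4 / 3 + ε) ^ ((N - 1 : ℝ) / 4) * (∏ j, ‖bs j‖) ^ ((1 : ℝ) / N) := by
  intro i
  have hA : (0 : ℝ) ≤ 4 / 3 + ε := by positivity
  have hα : 1 ≤ √(4 / 3 + ε) := Real.one_le_sqrt.2 (by linarith)
  have hN : N ≠ 0 := (Fin.pos i).ne'
  have hf : ∀ j, 0 ≤ ‖bs j‖ := fun j => norm_nonneg (bs j)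
  have hpow := pow_card_le_pow_sum_range_mul_prod hα hf
    (fun _ => GapFree.exists_mem_notMem_le_mul hGapFree hα hf hLLL) i
  rw [Fintype.card_fin, Real.sqrt_pow_sum_range hA,
    ← Real.rpow_inv_natCast_pow (prod_nonneg fun j _ => hf j) hN, ← mul_pow] at hpow
  rw [one_div]
  exact le_of_pow_le_pow_left₀ hN (by positivity) hpow

/-- Gap-free LLL: if an LLL-reduced basis (whose successive Gram–Schmidt norms satisfy
`‖b i*‖ ≤ √(4/3+ε)·‖b (i+1)*‖`, a consequence of the Lovász condition) is gap-free,
then every Gram–Schmidt norm is at most `(4/3+ε)^((N−1)/4) · vol(L)^(1/N)`. -/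
theorem gap_free_LLL (N : ℕ) (hN : 1 ≤ N) (ε : ℝ) (hε : 0 < ε)
    (b : Fin N → EuclideanSpace ℝ (Fin N)) (hb : LinearIndependent ℝ b)
    (bs : Fin N → EuclideanSpace ℝ (Fin N)) (hbs : bs = gramSchmidtFin b)
    (hLLL : ∀ i : Fin N, ∀ h : i.val + 1 < N,
      ‖bs i‖ ≤ Real.sqrt (4 / 3 + ε) * ‖bs ⟨i.val + 1, h⟩‖)
    (hGapFree : ¬ ∃ r : ℕ, r + 1 < N ∧
      ∀ i j : Fin N, i.val ≤ r → r < j.val → ‖bs i‖ < ‖bs j‖) :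
    ∀ i : Fin N, ‖bs i‖ ≤ (4 / 3 + ε) ^ ((N - 1 : ℝ) / 4) * (∏ j, ‖bs j‖) ^ ((1 : ℝ) / N) :=
  gap_free_LLL_general N ε hε bs hLLL hGapFree
end

section
/- Let L be a lattice with ordered basis b_1,…,b_N and let L̂ ⊆ L be a D-dimensional sublattice. Let K be the smallest index such that L̂ is contained in the lattice generated by b_1,…,b_K. Then there exists a basis c_1,…,c_D of L̂ such that the last Gram–Schmidt vector satisfies ‖c_D*‖ ≥ ‖b_K*‖. -/
open Submodule InnerProductSpace

section GramSchmidt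

variable {𝕜 E : Type*} [RCLike 𝕜] [NormedAddCommGroup E] [InnerProductSpace 𝕜 E]

theorem norm_le_norm_of_sub_smul_mem {W : Submodule 𝕜 E} {p q : E} (hp : p ∈ Wᗮ) {t : 𝕜}
    (ht : 1 ≤ ‖t‖) (hq : q - t • p ∈ W) : ‖p‖ ≤ ‖q‖ := by
  have horth : inner 𝕜 (t • p) (q - t • p) = 0 := by
    rw [inner_smul_left, inner_left_of_mem_orthogonal hq hp, mul_zero]
  have hpyth := norm_add_sq_eq_norm_sq_add_norm_sq_of_inner_eq_zero _ _ horth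
  rw [add_sub_cancel] at hpyth
  calc ‖p‖ ≤ ‖t • p‖ := by rw [norm_smul]; exact le_mul_of_one_le_left (norm_nonneg _) ht
    _ ≤ ‖q‖ := by nlinarith [norm_nonneg (t • p), norm_nonneg q, sq_nonneg ‖q - t • p‖]

variable {ι ι' : Type*} [LinearOrder ι] [LocallyFiniteOrderBot ι] [WellFoundedLT ι]
  [LinearOrder ι'] [LocallyFiniteOrderBot ι'] [WellFoundedLT ι']

theorem sub_gramSchmidt_mem_span_Iio (f : ι → E) (n : ι) :
    f n - gramSchmidt 𝕜 f n ∈ span 𝕜 (f '' Set.Iio n) := by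
  rw [gramSchmidt_def, sub_sub_cancel, ← span_gramSchmidt_Iio]
  refine sum_mem fun i hi => ?_
  have hle : 𝕜 ∙ gramSchmidt 𝕜 f i ≤ span 𝕜 (gramSchmidt 𝕜 f '' Set.Iio n) :=
    span_mono (Set.singleton_subset_iff.mpr (Set.mem_image_of_mem _ (Finset.mem_Iio.mp hi)))
  exact hle (starProjection_apply_mem _ _)

theorem gramSchmidt_mem_orthogonal_span_Iio (f : ι → E) (n : ι) :
    gramSchmidt 𝕜 f n ∈ (span 𝕜 (f '' Set.Iio n))ᗮ := by
  rw [← span_gramSchmidt_Iio, ← span_singleton_le_iff_mem, ← isOrtho_iff_le, isOrtho_span]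
  rintro _ rfl _ ⟨i, hi, rfl⟩
  exact gramSchmidt_orthogonal 𝕜 f (ne_of_gt hi)

theorem norm_gramSchmidt_le_of_span_Iio_le (b : ι → E) (c : ι' → E) {k : ι} {d : ι'}
    (hspan : span 𝕜 (c '' Set.Iio d) ≤ span 𝕜 (b '' Set.Iio k)) {t : 𝕜} (ht : 1 ≤ ‖t‖)
    (hd : c d - t • b k ∈ span 𝕜 (b '' Set.Iio k)) :
    ‖gramSchmidt 𝕜 b k‖ ≤ ‖gramSchmidt 𝕜 c d‖ := by
  refine norm_le_norm_of_sub_smul_mem (gramSchmidt_mem_orthogonal_span_Iio b k) ht ?_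
  have hsplit : gramSchmidt 𝕜 c d - t • gramSchmidt 𝕜 b k =
      (c d - t • b k) - (c d - gramSchmidt 𝕜 c d) + t • (b k - gramSchmidt 𝕜 b k) := by
    module
  rw [hsplit]
  exact add_mem (sub_mem hd (hspan (sub_gramSchmidt_mem_span_Iio c d)))
    (smul_mem _ _ (sub_gramSchmidt_mem_span_Iio b k))

end GramSchmidt

theorem LinearIndependent.sub_repr_smul_mem_span_image {R M ι : Type*} [Ring R] [AddCommGroup M]
    [Module R M] {b : ι → M} (hb : LinearIndependent R b) {s : Set ι} {k : ι}
    (x : span R (Set.range b)) (hx : (x : M) ∈ span R (b '' insert k s)) :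
    (x : M) - hb.repr x k • b k ∈ span R (b '' s) := by
  classical
  obtain ⟨l, hl, hlx⟩ := (Finsupp.mem_span_image_iff_linearCombination R).mp hx
  rw [hb.repr_eq hlx, Finsupp.mem_span_image_iff_linearCombination R]
  refine ⟨l.erase k, fun i hi => ?_, ?_⟩
  · rw [Finset.mem_coe, Finsupp.support_erase, Finset.mem_erase] at hi
    exact (hl hi.2).resolve_left hi.1
  · have hsplit := congrArg (Finsupp.linearCombination R b) (Finsupp.single_add_erase k l)
    rw [map_add, Finsupp.linearCombination_single] at hsplit
    rw [← hlx, ← hsplit, add_sub_cancel_left]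

theorem Module.Basis.exists_forall_castSucc_mem_ker {R M : Type*} [CommRing R] [IsDomain R]
    [IsPrincipalIdealRing R] [AddCommGroup M] [Module R M] {n : ℕ} (B : Basis (Fin (n + 1)) R M)
    (f : M →ₗ[R] R) :
    ∃ c : Basis (Fin (n + 1)) R M, ∀ i : Fin n, c i.castSucc ∈ LinearMap.ker f := by
  by_cases hf : f = 0
  · exact ⟨B, fun i => by simp [hf]⟩
  set g := IsPrincipal.generator (LinearMap.range f)
  have hg : g ≠ 0 := by
    rwa [Ne, ← IsPrincipal.eq_bot_iff_generator_eq_zero, LinearMap.range_eq_bot]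
  obtain ⟨e, he⟩ : ∃ e, f e = g := IsPrincipal.generator_mem (LinearMap.range f)
  obtain ⟨m, C⟩ := Submodule.basisOfPid B (LinearMap.ker f)
  have hli : ∀ (r : R), ∀ x ∈ LinearMap.ker f, r • e + x = 0 → r = 0 := by
    intro r x hx hrx
    have := congrArg f hrx
    rw [map_add, map_smul, he, LinearMap.mem_ker.mp hx, smul_eq_mul, add_zero, map_zero] at this
    exact (mul_eq_zero.mp this).resolve_right hg
  have hsp : ∀ z : M, ∃ r : R, z + r • e ∈ LinearMap.ker f := by
    intro z
    obtain ⟨q, hq⟩ := (IsPrincipal.mem_iff_generator_dvd _).mp (LinearMap.mem_range_self f z)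
    exact ⟨-q, by rw [LinearMap.mem_ker, map_add, map_smul, he, hq, smul_eq_mul]; ring⟩
  let c := Basis.mkFinCons e C hli hsp
  obtain rfl : m = n := by
    simpa using Fintype.card_congr (c.indexEquiv B)
  refine ⟨c.reindex Fin.revPerm, fun i => ?_⟩
  simp [c, Fin.rev_castSucc]

theorem Submodule.exists_basis_of_le_span_image_insert {R M ι : Type*} [CommRing R] [IsDomain R]
    [IsPrincipalIdealRing R] [AddCommGroup M] [Module R M] {b : ι → M}
    (hb : LinearIndependent R b) {s : Set ι} {k : ι} {L : Submodule R M} {n : ℕ}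
    (B : Module.Basis (Fin (n + 1)) R L) (hL : L ≤ span R (b '' insert k s))
    (hLs : ¬ L ≤ span R (b '' s)) :
    ∃ c : Module.Basis (Fin (n + 1)) R L, (∀ i : Fin n, (c i.castSucc : M) ∈ span R (b '' s)) ∧
      ∃ v : R, v ≠ 0 ∧ (c (Fin.last n) : M) - v • b k ∈ span R (b '' s) := by
  have hsub := hL.trans (span_mono (Set.image_subset_range b _))
  let f := Finsupp.lapply k ∘ₗ hb.repr ∘ₗ inclusion hsub
  have hcoord (x : L) : (x : M) - f x • b k ∈ span R (b '' s) :=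
    hb.sub_repr_smul_mem_span_image (inclusion hsub x) (hL x.2)
  obtain ⟨c, hc⟩ := B.exists_forall_castSucc_mem_ker f
  refine ⟨c, fun i => ?_, f (c (Fin.last n)), fun h0 => hLs fun x hx => ?_, hcoord _⟩
  · simpa [LinearMap.mem_ker.mp (hc i)] using hcoord (c i.castSucc)
  · have hf : f = 0 := c.ext (Fin.lastCases h0 hc)
    simpa [hf] using hcoord ⟨x, hx⟩

/-- Dual of sublattice: if `K` is the smallest index such that the `D`-dimensional
sublattice `L̂` is contained in the lattice generated by `b 1, …, b K`, then `L̂` has a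
basis `c` whose last Gram–Schmidt vector satisfies `‖c D*‖ ≥ ‖b K*‖`. -/
theorem dual_of_sublattice (N D K : ℕ) (hD : 1 ≤ D) (hK : 1 ≤ K) (hKN : K ≤ N)
    (b : Fin N → EuclideanSpace ℝ (Fin N)) (hb : LinearIndependent ℝ b)
    (a : Fin D → EuclideanSpace ℝ (Fin N)) (ha : LinearIndependent ℝ a)
    (Lhat : Submodule ℤ (EuclideanSpace ℝ (Fin N)))
    (hLhat : Lhat = Submodule.span ℤ (Set.range a))
    (hcontained : Lhat ≤ Submodule.span ℤ (b '' {i : Fin N | i.val < K}))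
    (hKmin : ∀ K' : ℕ, K' < K → ¬ Lhat ≤ Submodule.span ℤ (b '' {i : Fin N | i.val < K'})) :
    ∃ c : Fin D → EuclideanSpace ℝ (Fin N),
      Submodule.span ℤ (Set.range c) = Lhat ∧
      ‖gramSchmidtFin b ⟨K - 1, by omega⟩‖ ≤ ‖gramSchmidtFin c ⟨D - 1, by omega⟩‖ := by
  obtain ⟨n, rfl⟩ : ∃ n, D = n + 1 := ⟨D - 1, by omega⟩
  subst hLhat
  set k : Fin N := ⟨K - 1, by omega⟩
  have hIic : {i : Fin N | i.val < K} = insert k (Set.Iio k) := by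
    ext i
    simp only [Set.mem_ofPred_eq, Set.mem_insert_iff, Set.mem_Iio, Fin.ext_iff, Fin.lt_def, k]
    omega
  have hIio : {i : Fin N | i.val < K - 1} = Set.Iio k := by
    ext i; simp [k, Fin.lt_def]
  obtain ⟨c, hc, v, hv, hlast⟩ := exists_basis_of_le_span_image_insert (hb.restrict_scalars' ℤ)
    (Module.Basis.span (ha.restrict_scalars' ℤ)) (hIic ▸ hcontained)
    (hIio ▸ hKmin (K - 1) (by omega))
  refine ⟨(span ℤ (Set.range a)).subtype ∘ c, ?_, ?_⟩
  · rw [Set.range_comp, span_image, c.span_eq, map_subtype_top]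
  -- `gramSchmidtFin` differs from `gramSchmidt` only in a proof of well-foundedness.
  show ‖gramSchmidt ℝ b k‖ ≤
    ‖gramSchmidt ℝ (fun i => (c i : EuclideanSpace ℝ (Fin N))) (Fin.last n)‖
  refine norm_gramSchmidt_le_of_span_Iio_le _ _ ?_ (t := (v : ℝ)) ?_ ?_
  · refine span_le.mpr ?_
    rintro _ ⟨i, hi, rfl⟩
    obtain ⟨j, rfl⟩ := Fin.exists_castSucc_eq.mpr (ne_of_lt hi)
    exact span_le_restrictScalars ℤ ℝ _ (hc j)
  · rw [Real.norm_eq_abs, ← Int.cast_abs]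
    exact_mod_cast Int.one_le_abs hv
  · rw [Int.cast_smul_eq_zsmul]
    exact span_le_restrictScalars ℤ ℝ _ hlast
end

section
/- Orthogonal projection does not increase Gram–Schmidt norms: if π is the orthogonal projection onto a subspace W ⊆ R^N and b_1,…,b_N is a finite sequence of vectors, then for each i the i-th Gram–Schmidt vector of the projected family (π(b_1),…,π(b_N)) has norm at most that of b_i* (the i-th Gram–Schmidt vector of the original family), i.e., ‖(π(b))_i*‖ ≤ ‖b_i*‖. -/
open Submodule

namespace InnerProductSpace

variable {𝕜 E F ι : Type*} [RCLike 𝕜] [NormedAddCommGroup E] [InnerProductSpace 𝕜 E]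
  [NormedAddCommGroup F] [InnerProductSpace 𝕜 F]
  [LinearOrder ι] [LocallyFiniteOrderBot ι] [WellFoundedLT ι]

theorem sub_gramSchmidt_mem_span_Iio (f : ι → E) (i : ι) :
    f i - gramSchmidt 𝕜 f i ∈ span 𝕜 (f '' Set.Iio i) := by
  rw [gramSchmidt_def, sub_sub_cancel, ← span_gramSchmidt_Iio]
  refine sum_mem fun k hk => ?_
  have hk_span : 𝕜 ∙ gramSchmidt 𝕜 f k ≤ span 𝕜 (gramSchmidt 𝕜 f '' Set.Iio i) :=
    span_mono (Set.singleton_subset_iff.2 ⟨k, Finset.mem_Iio.1 hk, rfl⟩)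
  exact hk_span (starProjection_apply_mem _ _)

theorem gramSchmidt_mem_orthogonal_span_Iio (f : ι → E) (i : ι) :
    gramSchmidt 𝕜 f i ∈ (span 𝕜 (f '' Set.Iio i))ᗮ := by
  rw [← span_gramSchmidt_Iio]
  refine isOrtho_span.2 ?_ (mem_span_singleton_self _)
  rintro _ rfl _ ⟨k, hk, rfl⟩
  exact gramSchmidt_orthogonal 𝕜 f (ne_of_gt hk)

instance finiteDimensional_span_image_Iio (f : ι → E) (i : ι) :
    FiniteDimensional 𝕜 (span 𝕜 (f '' Set.Iio i)) :=
  FiniteDimensional.span_of_finite 𝕜 ((Set.finite_Iio i).image f)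

theorem gramSchmidt_eq_starProjection_orthogonal (f : ι → E) (i : ι) :
    gramSchmidt 𝕜 f i = (span 𝕜 (f '' Set.Iio i))ᗮ.starProjection (f i) :=
  (eq_starProjection_of_mem_orthogonal' (gramSchmidt_mem_orthogonal_span_Iio f i)
    (le_orthogonal_orthogonal _ (sub_gramSchmidt_mem_span_Iio f i)) (add_sub_cancel _ _).symm).symm

theorem norm_gramSchmidt_le_norm_sub (f : ι → E) (i : ι) {v : E}
    (hv : v ∈ span 𝕜 (f '' Set.Iio i)) : ‖gramSchmidt 𝕜 f i‖ ≤ ‖f i - v‖ := by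
  have hv' : (span 𝕜 (f '' Set.Iio i))ᗮ.starProjection v = 0 :=
    (starProjection_apply_eq_zero_iff _).2 (le_orthogonal_orthogonal _ hv)
  calc ‖gramSchmidt 𝕜 f i‖ = ‖(span 𝕜 (f '' Set.Iio i))ᗮ.starProjection (f i - v)‖ := by
        rw [gramSchmidt_eq_starProjection_orthogonal, map_sub, hv', sub_zero]
    _ ≤ ‖f i - v‖ := norm_starProjection_apply_le _ _

theorem norm_gramSchmidt_comp_le (L : E →ₗ[𝕜] F) (f : ι → E) (i : ι) :
    ‖gramSchmidt 𝕜 (L ∘ f) i‖ ≤ ‖L (gramSchmidt 𝕜 f i)‖ := by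
  have hspan : L (f i - gramSchmidt 𝕜 f i) ∈ span 𝕜 ((L ∘ f) '' Set.Iio i) := by
    rw [Set.image_comp]
    exact apply_mem_span_image_of_mem_span L (sub_gramSchmidt_mem_span_Iio f i)
  simpa only [Function.comp_apply, map_sub, sub_sub_cancel] using
    norm_gramSchmidt_le_norm_sub (L ∘ f) i hspan

end InnerProductSpace

open InnerProductSpace in
/-- Orthogonal projection does not increase Gram–Schmidt norms: the `i`-th Gram–Schmidt
vector of the projected family `(π(b 1), …, π(b M))` has norm at most `‖b i*‖`. -/
theorem gramSchmidt_norm_le_of_orthogonalProjection (N M : ℕ)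
    (W : Submodule ℝ (EuclideanSpace ℝ (Fin N)))
    (b : Fin M → EuclideanSpace ℝ (Fin N)) :
    ∀ i : Fin M,
      ‖gramSchmidtFin (fun j => (Submodule.orthogonalProjectionOnto W (b j) : EuclideanSpace ℝ (Fin N))) i‖ ≤
        ‖gramSchmidtFin b i‖ := by
  intro i
  unfold gramSchmidtFin
  calc _ ≤ ‖W.starProjection (gramSchmidt ℝ b i)‖ :=
        norm_gramSchmidt_comp_le W.starProjection.toLinearMap b i
    _ ≤ ‖gramSchmidt ℝ b i‖ := W.norm_starProjection_apply_le _
end
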